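/- arXiv:2312.17263 — 2 statements merged into one kernel-verified Lean document; each statement's English description precedes it below -/
import Mathlib

section
/- If X₁,…,Xₙ are independent random variables each distributed N(μ, σ²), then the sample mean X̄ = (1/n)∑Xᵢ and the sample variance S² = (1/(n-1))∑(Xᵢ - X̄)² are independent random variables. -/
/-!
The vector `(X̄, (Xⱼ - X̄)ⱼ)` is a linear image of the Gaussian vector `(Xᵢ)ᵢ`, hence jointly
Gaussian, and `Cov(X̄, Xⱼ - X̄) = σ²/n - σ²/n = 0`. Uncorrelated jointly Gaussian families are
independent, and `S²` is a function of the residuals `Xⱼ - X̄` alone.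
-/

open MeasureTheory ProbabilityTheory Finset

namespace ProbabilityTheory

variable {Ω ι : Type*} {mΩ : MeasurableSpace Ω} {P : Measure Ω} [Fintype ι]
  {X : ι → Ω → ℝ} {v : ℝ}

noncomputable def sampleMean (X : ι → Ω → ℝ) : Ω → ℝ := fun ω => (∑ i, X i ω) / Fintype.card ι

lemma memLp_sampleMean (hX : ∀ i, MemLp (X i) 2 P) : MemLp (sampleMean X) 2 P := by
  unfold sampleMean
  simpa only [div_eq_mul_inv] using (memLp_finsetSum univ fun i _ => hX i).mul_const _

section Uncorrelated

variable [IsFiniteMeasure P]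

lemma covariance_sampleMean_left (hX : ∀ i, MemLp (X i) 2 P)
    (hunc : Pairwise fun i j => cov[X i, X j; P] = 0) (hvar : ∀ i, Var[X i; P] = v) (j : ι) :
    cov[sampleMean X, X j; P] = v / Fintype.card ι := by
  unfold sampleMean
  rw [covariance_fun_div_left, covariance_fun_sum_left hX (hX j),
    sum_eq_single j (fun i _ hij => hunc hij) (by simp), covariance_self (hX j).aemeasurable,
    hvar]

lemma variance_sampleMean [Nonempty ι] (hX : ∀ i, MemLp (X i) 2 P)
    (hunc : Pairwise fun i j => cov[X i, X j; P] = 0) (hvar : ∀ i, Var[X i; P] = v) :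
    Var[sampleMean X; P] = v / Fintype.card ι := by
  have hcard : (Fintype.card ι : ℝ) ≠ 0 := by positivity
  rw [← covariance_self (memLp_sampleMean hX).aemeasurable]
  conv_lhs => enter [2]; unfold sampleMean
  rw [covariance_fun_div_right, covariance_fun_sum_right hX (memLp_sampleMean hX)]
  simp only [covariance_sampleMean_left hX hunc hvar, sum_const, card_univ, nsmul_eq_mul]
  field_simp

lemma covariance_sampleMean_sub (hX : ∀ i, MemLp (X i) 2 P)
    (hunc : Pairwise fun i j => cov[X i, X j; P] = 0) (hvar : ∀ i, Var[X i; P] = v) (j : ι) :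
    cov[sampleMean X, fun ω => X j ω - sampleMean X ω; P] = 0 := by
  have : Nonempty ι := ⟨j⟩
  rw [covariance_fun_sub_right (memLp_sampleMean hX) (hX j) (memLp_sampleMean hX),
    covariance_self (memLp_sampleMean hX).aemeasurable, covariance_sampleMean_left hX hunc hvar,
    variance_sampleMean hX hunc hvar, sub_self]

end Uncorrelated

/-- `X̄` is packaged as a `Unit`-indexed family to fit `HasGaussianLaw.indepFun_of_covariance_eval`. -/
lemma HasGaussianLaw.sampleMean_prod_sub (hX : HasGaussianLaw (fun ω i => X i ω) P) :
    HasGaussianLaw (fun ω => (fun _ : Unit => sampleMean X ω,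
      fun j => X j ω - sampleMean X ω)) P := by
  let mean : (ι → ℝ) →L[ℝ] ℝ := (Fintype.card ι : ℝ)⁻¹ • ∑ i, ContinuousLinearMap.proj i
  let L := (ContinuousLinearMap.pi fun _ : Unit => mean).prod
    (ContinuousLinearMap.pi fun j => ContinuousLinearMap.proj j - mean)
  have hL : (fun ω => (fun _ : Unit => sampleMean X ω, fun j => X j ω - sampleMean X ω)) =
      L ∘ fun ω i => X i ω := by
    ext ω <;> simp [L, mean, sampleMean, div_eq_inv_mul]
  rw [hL]
  exact hX.map L

lemma HasGaussianLaw.indepFun_sampleMean_sub (hX : HasGaussianLaw (fun ω i => X i ω) P)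
    (hunc : Pairwise fun i j => cov[X i, X j; P] = 0) (hvar : ∀ i, Var[X i; P] = v) :
    IndepFun (sampleMean X) (fun ω j => X j ω - sampleMean X ω) P := by
  have := hX.isProbabilityMeasure
  have hL2 i : MemLp (X i) 2 P := (hX.eval i).memLp_two
  exact (hX.sampleMean_prod_sub.indepFun_of_covariance_eval fun _ j =>
    covariance_sampleMean_sub hL2 hunc hvar j).comp (measurable_pi_apply ()) measurable_id

end ProbabilityTheory

theorem sample_mean_var_indep_general
    {Ω : Type*} [MeasureSpace Ω]
    (n : ℕ) (μ : ℝ) (σ : NNReal)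
    (X : Fin n → Ω → ℝ)
    (hindep : iIndepFun X ℙ)
    (hdist : ∀ i, Measure.map (X i) ℙ = gaussianReal μ (σ ^ 2)) :
    IndepFun
      (fun ω => (∑ i, X i ω) / n)
      (fun ω => (∑ i, (X i ω - (∑ j, X j ω) / n) ^ 2) / (n - 1)) ℙ := by
  have hlaw i : HasLaw (X i) (gaussianReal μ (σ ^ 2)) ℙ :=
    ⟨.of_map_ne_zero (by rw [hdist i]; exact IsProbabilityMeasure.ne_zero _), hdist i⟩
  have hG : HasGaussianLaw (fun ω i => X i ω) ℙ :=
    hindep.hasGaussianLaw fun i => (hlaw i).hasGaussianLaw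
  have hL2 i : MemLp (X i) 2 ℙ := (hG.eval i).memLp_two
  have hunc : Pairwise fun i j => cov[X i, X j; ℙ] = 0 := fun i j hij =>
    (hindep.indepFun hij).covariance_eq_zero (hL2 i) (hL2 j)
  have hvar i : Var[X i; ℙ] = σ ^ 2 := by
    rw [(hlaw i).variance_eq, variance_id_gaussianReal, NNReal.coe_pow]
  have h := hG.indepFun_sampleMean_sub hunc hvar
  unfold sampleMean at h
  rw [Fintype.card_fin] at h
  exact h.comp measurable_id
    (by fun_prop : Measurable fun r : Fin n → ℝ => (∑ i, r i ^ 2) / (n - 1))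

theorem sample_mean_var_indep
    {Ω : Type*} [MeasureSpace Ω] [IsProbabilityMeasure (ℙ : Measure Ω)]
    (n : ℕ) (hn : 2 ≤ n) (μ : ℝ) (σ : NNReal) (hσ : 0 < σ)
    (X : Fin n → Ω → ℝ) (hmeas : ∀ i, Measurable (X i))
    (hindep : iIndepFun X ℙ)
    (hdist : ∀ i, Measure.map (X i) ℙ = gaussianReal μ (σ ^ 2)) :
    IndepFun
      (fun ω => (∑ i, X i ω) / n)
      (fun ω => (∑ i, (X i ω - (∑ j, X j ω) / n) ^ 2) / (n - 1)) ℙ :=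
  sample_mean_var_indep_general n μ σ X hindep hdist
end

section
/- If A is an orthogonal n×n matrix with first row (1/√n,…,1/√n) and Y = A ⬝ X, then ∑ᵢ (Xᵢ - X̄)² = ∑_{i=2}^{n} Yᵢ², where X̄ is the mean of X. -/
/-! Since `A` is orthogonal, `∑ Yᵢ² = ∑ Xᵢ²`, and the first row of `A` gives `Y₀ = (∑ Xⱼ)/√n`,
so `∑_{i ≠ 0} Yᵢ² = ∑ Xᵢ² - (∑ Xⱼ)²/n`, which is the usual expansion of `∑ (Xᵢ - X̄)²`. -/

open Matrix Finset

theorem Matrix.sum_sq_mulVec_of_transpose_mul_self {m n R : Type*} [Fintype m] [Fintype n]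
    [DecidableEq n] [CommSemiring R] {A : Matrix m n R} (hA : Aᵀ * A = 1) (x : n → R) :
    ∑ i, (A *ᵥ x) i ^ 2 = ∑ j, x j ^ 2 := by
  have h : (A *ᵥ x) ⬝ᵥ (A *ᵥ x) = x ⬝ᵥ x := by
    rw [dotProduct_mulVec, ← mulVec_transpose, mulVec_mulVec, hA, one_mulVec]
  simpa only [dotProduct, sq] using h

theorem Matrix.mulVec_apply_of_row_eq {m n R : Type*} [Fintype n] [NonUnitalNonAssocSemiring R]
    {A : Matrix m n R} {i : m} {c : R} (hrow : ∀ j, A i j = c) (x : n → R) :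
    (A *ᵥ x) i = c * ∑ j, x j := by
  simp only [mulVec, dotProduct, hrow, mul_sum]

theorem Finset.sum_sub_mean_sq {ι K : Type*} [Field K] (s : Finset ι) (x : ι → K) :
    ∑ i ∈ s, (x i - (∑ j ∈ s, x j) / #s) ^ 2
      = ∑ i ∈ s, x i ^ 2 - (∑ j ∈ s, x j) ^ 2 / #s := by
  set S := ∑ j ∈ s, x j
  have hexpand : ∑ i ∈ s, (x i - S / #s) ^ 2
      = ∑ i ∈ s, x i ^ 2 - 2 * (S / #s) * S + #s * (S / #s) ^ 2 := by
    simp only [sub_sq, sum_add_distrib, sum_sub_distrib, ← sum_mul, ← mul_sum, sum_const,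
      nsmul_eq_mul]
    ring
  rw [hexpand]
  by_cases hs : (#s : K) = 0
  · simp [hs]
  · field_simp
    ring

theorem sum_sq_dev_eq_tail_sum (n : ℕ) (hn : 1 ≤ n)
    (A : Matrix (Fin n) (Fin n) ℝ) (hA : Aᵀ * A = 1)
    (hrow : ∀ j, A ⟨0, hn⟩ j = 1 / Real.sqrt n)
    (X : Fin n → ℝ) :
    ∑ i, (X i - (∑ j, X j) / n) ^ 2
      = ∑ i ∈ Finset.univ.erase ⟨0, hn⟩, (A.mulVec X i) ^ 2 := by
  have hfirst : (A *ᵥ X) ⟨0, hn⟩ ^ 2 = (∑ j, X j) ^ 2 / n := by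
    rw [mulVec_apply_of_row_eq hrow, mul_pow, div_pow, one_pow, Real.sq_sqrt n.cast_nonneg]
    ring
  have hsplit := add_sum_erase univ (fun i => (A *ᵥ X) i ^ 2) (mem_univ ⟨0, hn⟩)
  rw [sum_sq_mulVec_of_transpose_mul_self hA, hfirst] at hsplit
  have hdev := sum_sub_mean_sq univ X
  rw [card_univ, Fintype.card_fin] at hdev
  linarith
end
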